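/- arXiv:1909.11300 — 2 statements merged into one kernel-verified Lean document; each statement's English description precedes it below -/
import Mathlib

section
/- Let 0 < p ≤ 1 and let H be a complex Hilbert space. For A ∈ B(H)⁺ one has A = 0 if and only if for all X, Y ∈ B(H)⁺ the equality A = X 𝔪ₚ Y implies X = A and Y = A. -/
/-!
For positive `X`, `Y` the mean `X 𝔪ₚ Y` dominates both `2^(-1/p) X` and `2^(-1/p) Y`: for
invertible `X` this is the scalar inequality `((1 + t^p)/2)^(1/p) ≥ 2^(-1/p) max(1, t)`, carried
through the functional calculus and the congruence by `X^(1/2)`, and the Loewner order survives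
the strong limit that defines the mean in general. So `0 = X 𝔪ₚ Y` forces `X = Y = 0`.

Conversely `(2^(1/p) A) 𝔪ₚ 0 = A`, the operator form of the scalar identity
`M_p(2^(1/p) t, 0) = t` for `M_p(s, t) = ((s^p + t^p)/2)^(1/p)`. Regularising,
`(2^(1/p) A + ε) 𝔪ₚ ε` is the functional calculus of `A` at `t ↦ M_p(2^(1/p) t + ε, ε)`, which
lies between `t` and `t + O(ε + ε^p)` uniformly on the spectrum of `A`; for `p ≤ 1` the upper
bound comes from the convexity of `v ↦ (1 + v)^(1/p)`. Hence a positive `A` with only trivial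
decompositions satisfies `A = 0`, taking `X = 2^(1/p) A` and `Y = 0`.
-/

open scoped NNReal

variable {H : Type*} [NormedAddCommGroup H] [InnerProductSpace ℂ H] [CompleteSpace H]

/-- `m` is the Kubo–Ando `p`-th power mean on positive operators: it is given by
`A 𝔪ₚ B = A^(1/2) ((1 + (A^(-1/2) B A^(-1/2))^p)/2)^(1/p) A^(1/2)` on invertible positive
operators, and is determined on all positive operators by the strong limit
`(A 𝔪ₚ B) x = lim_{ε→0⁺} ((A + εI) 𝔪ₚ (B + εI)) x`. -/
def IsKuboAndoPowerMean (p : ℝ) (m : (H →L[ℂ] H) → (H →L[ℂ] H) → (H →L[ℂ] H)) : Prop :=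
  (∀ A B : H →L[ℂ] H, 0 ≤ A → 0 ≤ B → IsUnit A → IsUnit B →
      m A B = A ^ ((2 : ℝ)⁻¹) *
        ((2 : ℝ)⁻¹ • (1 + (A ^ (-(2 : ℝ)⁻¹) * B * A ^ (-(2 : ℝ)⁻¹)) ^ p)) ^ p⁻¹ *
        A ^ ((2 : ℝ)⁻¹)) ∧
  (∀ A B : H →L[ℂ] H, 0 ≤ A → 0 ≤ B → ∀ x : H,
      Filter.Tendsto (fun ε : ℝ => (m (A + ε • 1) (B + ε • 1)) x)
        (nhdsWithin 0 (Set.Ioi 0)) (nhds ((m A B) x)))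


open Filter Topology

open scoped ComplexOrder InnerProductSpace in
/-- Over `ℂ` positivity only asks for `0 ≤ ⟪T x, x⟫` in the complex order (symmetry is then
automatic), a closed condition, so the Loewner order passes to strong limits. -/
theorem ContinuousLinearMap.le_of_tendsto_apply {E ι : Type*} [NormedAddCommGroup E]
    [InnerProductSpace ℂ E] {l : Filter ι} [l.NeBot] {F G : ι → E →L[ℂ] E} {S T : E →L[ℂ] E}
    (hF : ∀ x, Tendsto (fun i ↦ F i x) l (𝓝 (S x)))
    (hG : ∀ x, Tendsto (fun i ↦ G i x) l (𝓝 (T x))) (hFG : ∀ᶠ i in l, F i ≤ G i) :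
    S ≤ T := by
  rw [le_def, isPositive_iff_complex]
  intro x
  have hlim : Tendsto (fun i ↦ ⟪(G i - F i) x, x⟫_ℂ) l (𝓝 ⟪(T - S) x, x⟫_ℂ) := by
    simpa only [sub_apply] using ((hG x).sub (hF x)).inner tendsto_const_nhds
  have hpos : 0 ≤ ⟪(T - S) x, x⟫_ℂ :=
    ge_of_tendsto hlim (hFG.mono fun i hi ↦ hi.inner_nonneg_left x)
  exact ⟨(Complex.eq_re_of_ofReal_le (r := 0) (mod_cast hpos)).symm,
    (Complex.nonneg_iff.mp hpos).1⟩

namespace NNReal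

noncomputable def powerMean (p : ℝ) (s t : ℝ≥0) : ℝ≥0 := (2⁻¹ * (s ^ p + t ^ p)) ^ p⁻¹

lemma continuous_powerMean_left {p : ℝ} (hp : 0 ≤ p) (t : ℝ≥0) :
    Continuous (powerMean p · t) := by
  unfold powerMean; fun_prop (disch := positivity)

lemma continuous_powerMean_right {p : ℝ} (hp : 0 ≤ p) (s : ℝ≥0) :
    Continuous (powerMean p s) := by
  unfold powerMean; fun_prop (disch := positivity)

lemma mul_rpow_inv {p : ℝ} (hp : p ≠ 0) (s t : ℝ≥0) : s * t ^ p⁻¹ = (s ^ p * t) ^ p⁻¹ := by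
  rw [mul_rpow, rpow_rpow_inv hp]

lemma powerMean_eq_rpow_half_mul {p : ℝ} (hp : p ≠ 0) {s : ℝ≥0} (hs : s ≠ 0) (t : ℝ≥0) :
    powerMean p s t = s ^ (2⁻¹ : ℝ) * powerMean p 1 (t * s ^ (-1 : ℝ)) * s ^ (2⁻¹ : ℝ) := by
  have hss : s ^ (2⁻¹ : ℝ) * s ^ (2⁻¹ : ℝ) = s := by rw [← rpow_add hs]; norm_num
  rw [mul_right_comm, hss, powerMean, powerMean, one_rpow, mul_rpow_inv hp]
  congr 1
  rw [mul_rpow, rpow_neg_one, inv_rpow]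
  field_simp

lemma two_inv_rpow_inv_mul_le_powerMean_left {p : ℝ} (hp : 0 < p) (s t : ℝ≥0) :
    2⁻¹ ^ p⁻¹ * s ≤ powerMean p s t := by
  rw [← rpow_rpow_inv hp.ne' s, ← mul_rpow, rpow_rpow_inv hp.ne']
  exact rpow_le_rpow (by gcongr; exact le_self_add) (inv_nonneg.mpr hp.le)

lemma two_inv_rpow_inv_mul_le_powerMean_right {p : ℝ} (hp : 0 < p) (s t : ℝ≥0) :
    2⁻¹ ^ p⁻¹ * t ≤ powerMean p s t := by
  rw [powerMean, add_comm]
  exact two_inv_rpow_inv_mul_le_powerMean_left hp t s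

lemma one_add_rpow_le {q : ℝ} (hq : 1 ≤ q) {v : ℝ≥0} (hv : v ≤ 1) :
    (1 + v) ^ q ≤ 1 + 2 ^ q * v := by
  have hchord := (convexOn_rpow hq).2 (Set.mem_Ici.mpr zero_le_one)
    (Set.mem_Ici.mpr zero_le_two) (sub_nonneg.mpr (coe_le_one.mpr hv)) v.2 (sub_add_cancel 1 _)
  simp only [smul_eq_mul, Real.one_rpow, mul_one] at hchord
  rw [← coe_le_coe]
  push_cast
  calc (1 + (v : ℝ)) ^ q = (1 - v + v * 2) ^ q := by ring_nf
    _ ≤ 1 - v + v * 2 ^ q := hchord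
    _ ≤ 1 + 2 ^ q * v := by linarith [v.2]

lemma two_inv_rpow_mul_two_rpow (x : ℝ) : (2⁻¹ : ℝ≥0) ^ x * 2 ^ x = 1 := by
  rw [← mul_rpow, inv_mul_cancel₀ two_ne_zero, one_rpow]

lemma powerMean_le {p : ℝ} (hp0 : 0 < p) (hp1 : p ≤ 1) {s e K : ℝ≥0}
    (he : 0 < e) (hes : e ≤ s) (hsK : s ≤ K) :
    powerMean p s e ≤ 2⁻¹ ^ p⁻¹ * s + K ^ (1 - p) * e ^ p := by
  have hs : s ≠ 0 := (he.trans_le hes).ne'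
  have hsp : s ^ p ≠ 0 := (rpow_pos (he.trans_le hes)).ne'
  set v := e ^ p / s ^ p
  have hv : v ≤ 1 := div_le_one_of_le₀ (rpow_le_rpow hes hp0.le) zero_le
  have hsv : s * v = s ^ (1 - p) * e ^ p := by
    rw [rpow_sub hs, rpow_one]; ring
  calc powerMean p s e = 2⁻¹ ^ p⁻¹ * (s * (1 + v) ^ p⁻¹) := by
        rw [mul_rpow_inv hp0.ne' s, ← mul_rpow, mul_add, mul_one, mul_div_cancel₀ _ hsp,
          powerMean]
    _ ≤ 2⁻¹ ^ p⁻¹ * (s * (1 + 2 ^ p⁻¹ * v)) := by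
        gcongr; exact one_add_rpow_le ((one_le_inv₀ hp0).mpr hp1) hv
    _ = 2⁻¹ ^ p⁻¹ * s + (2⁻¹ ^ p⁻¹ * 2 ^ p⁻¹) * (s * v) := by ring
    _ ≤ 2⁻¹ ^ p⁻¹ * s + K ^ (1 - p) * e ^ p := by
        rw [two_inv_rpow_mul_two_rpow, one_mul, hsv]; gcongr

end NNReal

namespace CFC

variable {A : Type*} [CStarAlgebra A] [PartialOrder A] [StarOrderedRing A]

/-- The closed formula of the definition of `IsKuboAndoPowerMean`. It is the Kubo–Ando mean only
for invertible `a`; otherwise the negative powers of `a` are junk values. -/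
noncomputable def powerMean (p : ℝ) (a b : A) : A :=
  a ^ ((2 : ℝ)⁻¹) * ((2 : ℝ)⁻¹ • (1 + (a ^ (-(2 : ℝ)⁻¹) * b * a ^ (-(2 : ℝ)⁻¹)) ^ p)) ^ p⁻¹ *
    a ^ ((2 : ℝ)⁻¹)

lemma smul_one_add_rpow_rpow_inv_eq_cfc {p : ℝ} (hp : 0 ≤ p) {a : A} (ha : 0 ≤ a) :
    ((2 : ℝ)⁻¹ • (1 + a ^ p)) ^ p⁻¹ = cfc (NNReal.powerMean p 1) a := by
  have hmid : (2 : ℝ)⁻¹ • (1 + a ^ p) = cfc (fun t : ℝ≥0 ↦ 2⁻¹ * (1 + t ^ p)) a := by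
    rw [cfc_const_mul .., cfc_const_add .., map_one, rpow_def, NNReal.smul_def]
    norm_num
  rw [hmid, rpow_def, ← cfc_comp' (· ^ p⁻¹) _ a]
  congr! with t
  rw [NNReal.powerMean, NNReal.one_rpow]

lemma rpow_half_mul_rpow_half {a : A} (ha : 0 ≤ a) : a ^ (2⁻¹ : ℝ) * a ^ (2⁻¹ : ℝ) = a := by
  rw [← one_div, ← sqrt_eq_rpow, sqrt_mul_sqrt_self a ha]

lemma powerMean_eq_conj_cfc {p : ℝ} (hp : 0 ≤ p) {a b : A} (hb : 0 ≤ b) :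
    powerMean p a b = a ^ (2⁻¹ : ℝ) *
      cfc (NNReal.powerMean p 1) (a ^ (-(2 : ℝ)⁻¹) * b * a ^ (-(2 : ℝ)⁻¹)) * a ^ (2⁻¹ : ℝ) := by
  rw [powerMean, smul_one_add_rpow_rpow_inv_eq_cfc hp (conjugate_nonneg_of_nonneg hb rpow_nonneg)]

lemma smul_le_powerMean_left {p : ℝ} (hp : 0 < p) {a b : A} (ha : 0 ≤ a) (hb : 0 ≤ b) :
    (2⁻¹ ^ p⁻¹ : ℝ≥0) • a ≤ powerMean p a b := by
  rw [powerMean_eq_conj_cfc hp.le hb]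
  have hd : algebraMap ℝ≥0 A (2⁻¹ ^ p⁻¹) ≤
      cfc (NNReal.powerMean p 1) (a ^ (-(2 : ℝ)⁻¹) * b * a ^ (-(2 : ℝ)⁻¹)) :=
    algebraMap_le_cfc _ _ _ (fun t _ ↦ by
      simpa using NNReal.two_inv_rpow_inv_mul_le_powerMean_left hp 1 t)
      (NNReal.continuous_powerMean_right hp.le 1).continuousOn
  calc (2⁻¹ ^ p⁻¹ : ℝ≥0) • a = a ^ (2⁻¹ : ℝ) * algebraMap ℝ≥0 A (2⁻¹ ^ p⁻¹) * a ^ (2⁻¹ : ℝ) := by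
        rw [Algebra.algebraMap_eq_smul_one, mul_smul_one, smul_mul_assoc,
          rpow_half_mul_rpow_half ha]
    _ ≤ _ := (IsSelfAdjoint.of_nonneg rpow_nonneg).conjugate_le_conjugate hd

lemma smul_le_powerMean_right {p : ℝ} (hp : 0 < p) {a b : A} (ha : 0 ≤ a) (hau : IsUnit a)
    (hb : 0 ≤ b) : (2⁻¹ ^ p⁻¹ : ℝ≥0) • b ≤ powerMean p a b := by
  rw [powerMean_eq_conj_cfc hp.le hb]
  set M := a ^ (-(2 : ℝ)⁻¹) * b * a ^ (-(2 : ℝ)⁻¹)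
  have hM : 0 ≤ M := conjugate_nonneg_of_nonneg hb rpow_nonneg
  have hd : (2⁻¹ ^ p⁻¹ : ℝ≥0) • M ≤ cfc (NNReal.powerMean p 1) M := by
    rw [← cfc_smul_id (R := ℝ≥0) _ M]
    exact cfc_mono (fun t _ ↦ NNReal.two_inv_rpow_inv_mul_le_powerMean_right hp 1 t)
      (hg := (NNReal.continuous_powerMean_right hp.le 1).continuousOn)
  have ha' : IsStrictlyPositive a := hau.isStrictlyPositive ha
  have hconj : a ^ (2⁻¹ : ℝ) * M * a ^ (2⁻¹ : ℝ) = b := by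
    simp only [M, ← mul_assoc]
    rw [rpow_mul_rpow_neg _ ha', one_mul, mul_assoc, rpow_neg_mul_rpow _ ha', mul_one]
  calc (2⁻¹ ^ p⁻¹ : ℝ≥0) • b = a ^ (2⁻¹ : ℝ) * ((2⁻¹ ^ p⁻¹ : ℝ≥0) • M) * a ^ (2⁻¹ : ℝ) := by
        rw [mul_smul_comm, smul_mul_assoc, hconj]
    _ ≤ _ := (IsSelfAdjoint.of_nonneg rpow_nonneg).conjugate_le_conjugate hd

lemma powerMean_algebraMap {p : ℝ} (hp : 0 < p) {a : A} (ha : 0 ≤ a) (hau : IsUnit a) (e : ℝ≥0) :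
    powerMean p a (algebraMap ℝ≥0 A e) = cfc (NNReal.powerMean p · e) a := by
  have h0 : 0 ∉ spectrum ℝ≥0 a := spectrum.zero_notMem ℝ≥0 hau
  have hinv : ContinuousOn (fun s : ℝ≥0 ↦ s ^ (-1 : ℝ)) (spectrum ℝ≥0 a) :=
    NNReal.continuousOn_rpow_const (Or.inl h0)
  have hM : a ^ (-(2 : ℝ)⁻¹) * algebraMap ℝ≥0 A e * a ^ (-(2 : ℝ)⁻¹) =
      cfc (fun s : ℝ≥0 ↦ e * s ^ (-1 : ℝ)) a := by
    rw [Algebra.algebraMap_eq_smul_one, mul_smul_one, smul_mul_assoc, ← rpow_add hau,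
      cfc_const_mul _ _ a hinv, ← rpow_def]
    norm_num
  have hh : Continuous (fun s : ℝ≥0 ↦ s ^ (2⁻¹ : ℝ)) := NNReal.continuous_rpow_const (by norm_num)
  have hmid : ContinuousOn (fun s ↦ NNReal.powerMean p 1 (e * s ^ (-1 : ℝ))) (spectrum ℝ≥0 a) :=
    (NNReal.continuous_powerMean_right hp.le 1).comp_continuousOn (continuousOn_const.mul hinv)
  rw [powerMean_eq_conj_cfc hp.le (algebraMap_nonneg A zero_le), hM,
    ← cfc_comp' _ _ a (NNReal.continuous_powerMean_right hp.le 1).continuousOn, rpow_def,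
    ← cfc_mul _ _ a hh.continuousOn hmid,
    ← cfc_mul (fun s ↦ s ^ (2⁻¹ : ℝ) * NNReal.powerMean p 1 (e * s ^ (-1 : ℝ))) _ a
      (hh.continuousOn.mul hmid) hh.continuousOn]
  exact cfc_congr fun s hs ↦
    (NNReal.powerMean_eq_rpow_half_mul hp.ne' (ne_of_mem_of_not_mem hs h0) e).symm

lemma powerMean_smul_add_algebraMap_bounds {p : ℝ} (hp0 : 0 < p) (hp1 : p ≤ 1) {a : A}
    (ha : 0 ≤ a) {e : ℝ≥0} (he0 : 0 < e) (he1 : e ≤ 1) :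
    a ≤ powerMean p ((2 ^ p⁻¹ : ℝ≥0) • a + algebraMap ℝ≥0 A e) (algebraMap ℝ≥0 A e) ∧
    powerMean p ((2 ^ p⁻¹ : ℝ≥0) • a + algebraMap ℝ≥0 A e) (algebraMap ℝ≥0 A e) ≤
      a + algebraMap ℝ≥0 A (2⁻¹ ^ p⁻¹ * e + (2 ^ p⁻¹ * ‖a‖₊ + 1) ^ (1 - p) * e ^ p) := by
  nontriviality A
  set c : ℝ≥0 := 2 ^ p⁻¹
  set δ : ℝ≥0 := 2⁻¹ ^ p⁻¹ * e + (c * ‖a‖₊ + 1) ^ (1 - p) * e ^ p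
  have hb0 : 0 ≤ c • a + algebraMap ℝ≥0 A e :=
    add_nonneg (smul_nonneg zero_le ha) (algebraMap_nonneg A zero_le)
  have hbu : IsUnit (c • a + algebraMap ℝ≥0 A e) :=
    ((isStrictlyPositive_algebraMap he0).nonneg_add (smul_nonneg zero_le ha)).isUnit
  have hb : c • a + algebraMap ℝ≥0 A e = cfc (fun t ↦ c * t + e) a := by
    rw [cfc_add_const .., cfc_const_mul_id ..]
  have hf : Continuous fun t ↦ NNReal.powerMean p (c * t + e) e :=
    (NNReal.continuous_powerMean_left hp0.le e).comp (by fun_prop)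
  rw [powerMean_algebraMap hp0 hb0 hbu, hb,
    ← cfc_comp' _ _ a (NNReal.continuous_powerMean_left hp0.le e).continuousOn]
  constructor
  · conv_lhs => rw [← cfc_id' ℝ≥0 a]
    refine cfc_mono (fun t _ ↦ ?_) (hg := hf.continuousOn)
    calc t = 2⁻¹ ^ p⁻¹ * (c * t) := by rw [← mul_assoc, NNReal.two_inv_rpow_mul_two_rpow, one_mul]
      _ ≤ 2⁻¹ ^ p⁻¹ * (c * t + e) := by gcongr; exact le_self_add
      _ ≤ _ := NNReal.two_inv_rpow_inv_mul_le_powerMean_left hp0 _ e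
  · have had : a + algebraMap ℝ≥0 A δ = cfc (· + δ) a := by rw [cfc_add_const .., cfc_id' ..]
    rw [had]
    refine cfc_mono (fun t ht ↦ ?_) (hf := hf.continuousOn)
    have htK : c * t + e ≤ c * ‖a‖₊ + 1 := by gcongr; exact spectrum.le_nnnorm_of_mem ht
    calc _ ≤ 2⁻¹ ^ p⁻¹ * (c * t + e) + (c * ‖a‖₊ + 1) ^ (1 - p) * e ^ p :=
          NNReal.powerMean_le hp0 hp1 he0 le_add_self htK
      _ = _ := by rw [mul_add, ← mul_assoc, NNReal.two_inv_rpow_mul_two_rpow, one_mul, add_assoc]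

end CFC

lemma isStrictlyPositive_smul_one {A : Type*} [CStarAlgebra A] [PartialOrder A]
    [StarOrderedRing A] {ε : ℝ} (hε : 0 < ε) : IsStrictlyPositive (ε • (1 : A)) := by
  rw [← Algebra.algebraMap_eq_smul_one]
  exact isStrictlyPositive_algebraMap hε

lemma smul_one_eq_algebraMap {A : Type*} [CStarAlgebra A] {ε : ℝ} (hε : 0 ≤ ε) :
    ε • (1 : A) = algebraMap ℝ≥0 A ε.toNNReal := by
  rw [Algebra.algebraMap_eq_smul_one, NNReal.smul_def, Real.coe_toNNReal _ hε]

namespace IsKuboAndoPowerMean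

variable {p : ℝ} {m : (H →L[ℂ] H) → (H →L[ℂ] H) → (H →L[ℂ] H)}

lemma apply_add_smul_one (hm : IsKuboAndoPowerMean p m) {A B : H →L[ℂ] H} (hA : 0 ≤ A)
    (hB : 0 ≤ B) {ε : ℝ} (hε : 0 < ε) :
    m (A + ε • 1) (B + ε • 1) = CFC.powerMean p (A + ε • 1) (B + ε • 1) := by
  have hε1 : IsStrictlyPositive (ε • 1 : H →L[ℂ] H) := isStrictlyPositive_smul_one hε
  exact hm.1 _ _ (add_nonneg hA hε1.nonneg) (add_nonneg hB hε1.nonneg)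
    (hε1.nonneg_add hA).isUnit (hε1.nonneg_add hB).isUnit

lemma smul_le_apply (hm : IsKuboAndoPowerMean p m) (hp : 0 < p) {A B : H →L[ℂ] H} (hA : 0 ≤ A)
    (hB : 0 ≤ B) : (2⁻¹ ^ p⁻¹ : ℝ≥0) • A ≤ m A B ∧ (2⁻¹ ^ p⁻¹ : ℝ≥0) • B ≤ m A B := by
  have hbounds : ∀ᶠ ε in 𝓝[>] (0 : ℝ), (2⁻¹ ^ p⁻¹ : ℝ≥0) • A ≤ m (A + ε • 1) (B + ε • 1) ∧
      (2⁻¹ ^ p⁻¹ : ℝ≥0) • B ≤ m (A + ε • 1) (B + ε • 1) := by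
    filter_upwards [self_mem_nhdsWithin] with ε hε
    have hε1 : IsStrictlyPositive (ε • 1 : H →L[ℂ] H) := isStrictlyPositive_smul_one hε
    have hAε := add_nonneg hA hε1.nonneg
    have hBε := add_nonneg hB hε1.nonneg
    have hshift : ∀ C : H →L[ℂ] H, (2⁻¹ ^ p⁻¹ : ℝ≥0) • C ≤ (2⁻¹ ^ p⁻¹ : ℝ≥0) • (C + ε • 1) :=
      fun C ↦ smul_le_smul_of_nonneg_left (le_add_of_nonneg_right hε1.nonneg) zero_le
    rw [hm.apply_add_smul_one hA hB hε]
    exact ⟨(hshift A).trans (CFC.smul_le_powerMean_left hp hAε hBε),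
      (hshift B).trans (CFC.smul_le_powerMean_right hp hAε (hε1.nonneg_add hA).isUnit hBε)⟩
  have hlim := hm.2 A B hA hB
  exact ⟨ContinuousLinearMap.le_of_tendsto_apply (fun _ ↦ tendsto_const_nhds) hlim
      (hbounds.mono fun _ h ↦ h.1),
    ContinuousLinearMap.le_of_tendsto_apply (fun _ ↦ tendsto_const_nhds) hlim
      (hbounds.mono fun _ h ↦ h.2)⟩

lemma eq_zero_of_apply_eq_zero (hm : IsKuboAndoPowerMean p m) (hp : 0 < p) {A B : H →L[ℂ] H}
    (hA : 0 ≤ A) (hB : 0 ≤ B) (h : m A B = 0) : A = 0 ∧ B = 0 := by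
  have hd : (2⁻¹ ^ p⁻¹ : ℝ≥0) ≠ 0 := (NNReal.rpow_pos (by norm_num)).ne'
  have key : ∀ X : H →L[ℂ] H, 0 ≤ X → (2⁻¹ ^ p⁻¹ : ℝ≥0) • X ≤ 0 → X = 0 := by
    intro X hX hle
    have := smul_le_smul_of_nonneg_left hle (zero_le (a := (2⁻¹ ^ p⁻¹ : ℝ≥0)⁻¹))
    rw [smul_smul, inv_mul_cancel₀ hd, one_smul, smul_zero] at this
    exact le_antisymm this hX
  obtain ⟨hA', hB'⟩ := hm.smul_le_apply hp hA hB
  rw [h] at hA' hB'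
  exact ⟨key A hA hA', key B hB hB'⟩

lemma apply_smul_zero (hm : IsKuboAndoPowerMean p m) (hp0 : 0 < p) (hp1 : p ≤ 1)
    {A : H →L[ℂ] H} (hA : 0 ≤ A) : m ((2 ^ p⁻¹ : ℝ≥0) • A) 0 = A := by
  set X := (2 ^ p⁻¹ : ℝ≥0) • A
  set δ : ℝ → ℝ≥0 := fun ε ↦
    2⁻¹ ^ p⁻¹ * ε.toNNReal + (2 ^ p⁻¹ * ‖A‖₊ + 1) ^ (1 - p) * ε.toNNReal ^ p
  have hX : 0 ≤ X := smul_nonneg zero_le hA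
  have hbounds : ∀ᶠ ε in 𝓝[>] (0 : ℝ), A ≤ m (X + ε • 1) (0 + ε • 1) ∧
      m (X + ε • 1) (0 + ε • 1) ≤ A + algebraMap ℝ≥0 _ (δ ε) := by
    filter_upwards [Ioc_mem_nhdsGT one_pos] with ε ⟨hε0, hε1⟩
    rw [hm.apply_add_smul_one hX le_rfl hε0, zero_add, smul_one_eq_algebraMap hε0.le]
    exact CFC.powerMean_smul_add_algebraMap_bounds hp0 hp1 hA (Real.toNNReal_pos.mpr hε0)
      (Real.toNNReal_le_one.mpr hε1)
  have hδ : Tendsto δ (𝓝[>] 0) (𝓝 0) := by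
    have : Continuous δ := by fun_prop (disch := positivity)
    simpa [δ, hp0.ne'] using (this.tendsto 0).mono_left nhdsWithin_le_nhds
  refine le_antisymm (ContinuousLinearMap.le_of_tendsto_apply (hm.2 X 0 hX le_rfl)
      (fun x ↦ ?_) (hbounds.mono fun _ h ↦ h.2))
    (ContinuousLinearMap.le_of_tendsto_apply (fun _ ↦ tendsto_const_nhds) (hm.2 X 0 hX le_rfl)
      (hbounds.mono fun _ h ↦ h.1))
  simpa [Algebra.algebraMap_eq_smul_one] using tendsto_const_nhds.add (hδ.smul_const x)

end IsKuboAndoPowerMean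

/-- For `0 < p ≤ 1` and a positive operator `A`, one has `A = 0` iff
whenever `A = X 𝔪ₚ Y` with `X, Y` positive, necessarily `X = A` and `Y = A`. -/
theorem eq_zero_iff_kuboAndo_decomposition_trivial (p : ℝ) (hp0 : 0 < p) (hp1 : p ≤ 1)
    (m : (H →L[ℂ] H) → (H →L[ℂ] H) → (H →L[ℂ] H)) (hm : IsKuboAndoPowerMean p m)
    (A : H →L[ℂ] H) (hA : 0 ≤ A) :
    A = 0 ↔ ∀ X Y : H →L[ℂ] H, 0 ≤ X → 0 ≤ Y → A = m X Y → X = A ∧ Y = A := by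
  constructor
  · rintro rfl X Y hX hY hXY
    exact hm.eq_zero_of_apply_eq_zero hp0 hX hY hXY.symm
  · intro h
    exact (h _ 0 (smul_nonneg zero_le hA) le_rfl (hm.apply_smul_zero hp0 hp1 hA).symm).2.symm
end

section
/- Let -1 ≤ p < 0 and let H be a complex Hilbert space. For A ∈ B(H)⁺ one has A = 0 if and only if A 𝔪ₚ X = A holds for every X ∈ B(H)⁺. -/
open scoped NNReal

variable {H : Type*} [NormedAddCommGroup H] [InnerProductSpace ℂ H] [CompleteSpace H]

/-! For `p < 0` the representing function `f t = ((1 + t ^ p) / 2) ^ (1 / p)` of the mean satisfies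
`f t ≤ 2 ^ (-1 / p) * min 1 t`, so on strictly positive elements `a 𝔪ₚ b ≤ 2 ^ (-1 / p) • a` and
`a 𝔪ₚ b ≤ 2 ^ (-1 / p) • b`. Hence `(εI) 𝔪ₚ (B + εI)` and `(A + εI) 𝔪ₚ (εI)` have norm `O(ε)`,
and the strong limit defining the mean gives `0 𝔪ₚ B = 0` and `A 𝔪ₚ 0 = 0`; in particular, if
`A 𝔪ₚ X = A` for all `X`, then `A = A 𝔪ₚ 0 = 0`. -/

noncomputable def powerMeanFun (p : ℝ) (t : ℝ≥0) : ℝ≥0 := (2⁻¹ * (1 + t ^ p)) ^ p⁻¹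

section Scalar

variable {p : ℝ}

lemma powerMeanFun_le (hp : p < 0) (t : ℝ≥0) : powerMeanFun p t ≤ 2 ^ (-p⁻¹) := by
  calc powerMeanFun p t ≤ 2⁻¹ ^ p⁻¹ :=
        NNReal.rpow_le_rpow_of_nonpos (by norm_num) (by simp) (inv_nonpos.mpr hp.le)
    _ = 2 ^ (-p⁻¹) := by rw [NNReal.inv_rpow, NNReal.rpow_neg]

lemma powerMeanFun_le_mul (hp : p < 0) {t : ℝ≥0} (ht : t ≠ 0) :
    powerMeanFun p t ≤ 2 ^ (-p⁻¹) * t := by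
  calc powerMeanFun p t ≤ (2⁻¹ * t ^ p) ^ p⁻¹ :=
        NNReal.rpow_le_rpow_of_nonpos (by positivity) (by gcongr; exact le_add_self)
          (inv_nonpos.mpr hp.le)
    _ = 2 ^ (-p⁻¹) * t := by
        rw [NNReal.mul_rpow, ← NNReal.rpow_mul, mul_inv_cancel₀ hp.ne, NNReal.rpow_one,
          NNReal.inv_rpow, NNReal.rpow_neg]

lemma continuousOn_powerMeanFun {s : Set ℝ≥0} (hs : 0 ∉ s) :
    ContinuousOn (powerMeanFun p) s := by
  have hinner : ContinuousOn (fun t : ℝ≥0 => 2⁻¹ * (1 + t ^ p)) s :=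
    continuousOn_const.mul (continuousOn_const.add (NNReal.continuousOn_rpow_const (.inl hs)))
  have houter : ContinuousOn (· ^ p⁻¹) ((fun t : ℝ≥0 => 2⁻¹ * (1 + t ^ p)) '' s) := by
    refine NNReal.continuousOn_rpow_const (.inl ?_)
    rintro ⟨t, -, ht⟩
    exact absurd ht (by positivity)
  exact houter.comp hinner (Set.mapsTo_image _ _)

end Scalar

section CStarAlgebra

variable {A : Type*} [CStarAlgebra A] [PartialOrder A] [StarOrderedRing A] {p : ℝ}

noncomputable def powerMean (p : ℝ) (a b : A) : A :=
  a ^ ((2 : ℝ)⁻¹) * ((2 : ℝ)⁻¹ • (1 + (a ^ (-(2 : ℝ)⁻¹) * b * a ^ (-(2 : ℝ)⁻¹)) ^ p)) ^ p⁻¹ *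
    a ^ ((2 : ℝ)⁻¹)

lemma cfc_powerMeanFun {y : A} (hy : IsStrictlyPositive y) :
    cfc (powerMeanFun p) y = ((2 : ℝ)⁻¹ • (1 + y ^ p)) ^ p⁻¹ := by
  have hy0 : 0 ∉ spectrum ℝ≥0 y := spectrum.zero_notMem ℝ≥0 hy.isUnit
  -- discharges, via `cfc_cont_tac`, the continuity side goals of the rewrites below
  have hpow : ContinuousOn (· ^ p) (spectrum ℝ≥0 y) := NNReal.continuousOn_rpow_const (.inl hy0)
  have hinner : (2 : ℝ)⁻¹ • (1 + y ^ p) = cfc (fun t : ℝ≥0 => 2⁻¹ * (1 + t ^ p)) y := by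
    rw [cfc_const_mul _ _ y, cfc_const_add _ _ y, CFC.rpow_def, NNReal.smul_def]
    norm_num
  rw [hinner, CFC.rpow_def, ← cfc_comp' ..]
  rfl

lemma powerMean_nonneg (a b : A) : 0 ≤ powerMean p a b :=
  conjugate_nonneg_of_nonneg CFC.rpow_nonneg CFC.rpow_nonneg

lemma rpow_inv_two_mul_rpow_inv_two {a : A} (ha : IsStrictlyPositive a) :
    a ^ ((2 : ℝ)⁻¹) * a ^ ((2 : ℝ)⁻¹) = a := by
  rw [← CFC.rpow_add ha.isUnit, ← one_div, add_halves, CFC.rpow_one a ha.nonneg]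

lemma isStrictlyPositive_conj_rpow_neg_inv_two {a b : A} (ha : IsStrictlyPositive a)
    (hb : IsStrictlyPositive b) :
    IsStrictlyPositive (a ^ (-(2 : ℝ)⁻¹) * b * a ^ (-(2 : ℝ)⁻¹)) :=
  IsStrictlyPositive.conjugate_of_isUnit_of_isSelfAdjoint b _ (ha.rpow a _).isUnit

lemma powerMean_le_smul_left (hp : p < 0) {a b : A} (ha : IsStrictlyPositive a)
    (hb : IsStrictlyPositive b) : powerMean p a b ≤ (2 : ℝ≥0) ^ (-p⁻¹) • a := by
  set y := a ^ (-(2 : ℝ)⁻¹) * b * a ^ (-(2 : ℝ)⁻¹)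
  have hy := isStrictlyPositive_conj_rpow_neg_inv_two ha hb
  have hmid : cfc (powerMeanFun p) y ≤ algebraMap ℝ≥0 A (2 ^ (-p⁻¹)) :=
    cfc_le_algebraMap _ _ _ (fun t _ => powerMeanFun_le hp t)
      (continuousOn_powerMeanFun (spectrum.zero_notMem ℝ≥0 hy.isUnit))
  calc powerMean p a b = a ^ ((2 : ℝ)⁻¹) * cfc (powerMeanFun p) y * a ^ ((2 : ℝ)⁻¹) := by
        rw [powerMean, cfc_powerMeanFun hy]
    _ ≤ a ^ ((2 : ℝ)⁻¹) * algebraMap ℝ≥0 A (2 ^ (-p⁻¹)) * a ^ ((2 : ℝ)⁻¹) :=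
        conjugate_le_conjugate_of_nonneg hmid CFC.rpow_nonneg
    _ = (2 : ℝ≥0) ^ (-p⁻¹) • a := by
        rw [Algebra.algebraMap_eq_smul_one, mul_smul_comm, mul_one, smul_mul_assoc,
          rpow_inv_two_mul_rpow_inv_two ha]

lemma powerMean_le_smul_right (hp : p < 0) {a b : A} (ha : IsStrictlyPositive a)
    (hb : IsStrictlyPositive b) : powerMean p a b ≤ (2 : ℝ≥0) ^ (-p⁻¹) • b := by
  set y := a ^ (-(2 : ℝ)⁻¹) * b * a ^ (-(2 : ℝ)⁻¹)
  have hy := isStrictlyPositive_conj_rpow_neg_inv_two ha hb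
  have hy0 : 0 ∉ spectrum ℝ≥0 y := spectrum.zero_notMem ℝ≥0 hy.isUnit
  have hmid : cfc (powerMeanFun p) y ≤ (2 : ℝ≥0) ^ (-p⁻¹) • y := by
    calc cfc (powerMeanFun p) y ≤ cfc (fun t => 2 ^ (-p⁻¹) * t) y :=
          cfc_mono (fun t ht => powerMeanFun_le_mul hp (ne_of_mem_of_not_mem ht hy0))
            (continuousOn_powerMeanFun hy0)
      _ = (2 : ℝ≥0) ^ (-p⁻¹) • y := cfc_const_mul_id _ y
  calc powerMean p a b = a ^ ((2 : ℝ)⁻¹) * cfc (powerMeanFun p) y * a ^ ((2 : ℝ)⁻¹) := by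
        rw [powerMean, cfc_powerMeanFun hy]
    _ ≤ a ^ ((2 : ℝ)⁻¹) * ((2 : ℝ≥0) ^ (-p⁻¹) • y) * a ^ ((2 : ℝ)⁻¹) :=
        conjugate_le_conjugate_of_nonneg hmid CFC.rpow_nonneg
    _ = (2 : ℝ≥0) ^ (-p⁻¹) • b := by
        rw [mul_smul_comm, smul_mul_assoc]
        congr 1
        simp only [y, ← mul_assoc, CFC.rpow_mul_rpow_neg _ ha, one_mul]
        rw [mul_assoc, CFC.rpow_neg_mul_rpow _ ha, mul_one]

lemma norm_powerMean_le_left (hp : p < 0) {a b : A} (ha : IsStrictlyPositive a)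
    (hb : IsStrictlyPositive b) : ‖powerMean p a b‖ ≤ 2 ^ (-p⁻¹) * ‖a‖ := by
  refine (CStarAlgebra.norm_le_norm_of_nonneg_of_le (powerMean_nonneg a b)
    (powerMean_le_smul_left hp ha hb)).trans_eq ?_
  rw [NNReal.smul_def, norm_smul, NNReal.coe_rpow, NNReal.coe_ofNat,
    Real.norm_of_nonneg (by positivity)]

lemma norm_powerMean_le_right (hp : p < 0) {a b : A} (ha : IsStrictlyPositive a)
    (hb : IsStrictlyPositive b) : ‖powerMean p a b‖ ≤ 2 ^ (-p⁻¹) * ‖b‖ := by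
  refine (CStarAlgebra.norm_le_norm_of_nonneg_of_le (powerMean_nonneg a b)
    (powerMean_le_smul_right hp ha hb)).trans_eq ?_
  rw [NNReal.smul_def, norm_smul, NNReal.coe_rpow, NNReal.coe_ofNat,
    Real.norm_of_nonneg (by positivity)]

end CStarAlgebra

lemma CStarAlgebra.norm_real_smul_one_le {A : Type*} [CStarAlgebra A] {ε : ℝ} (hε : 0 ≤ ε) :
    ‖(ε • 1 : A)‖ ≤ ε := by
  rcases subsingleton_or_nontrivial A with _ | _
  · simpa [Subsingleton.elim (ε • 1 : A) 0] using hε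
  · rw [norm_smul, CStarRing.norm_one, mul_one, Real.norm_of_nonneg hε]

namespace IsKuboAndoPowerMean

variable {p : ℝ} {m : (H →L[ℂ] H) → (H →L[ℂ] H) → (H →L[ℂ] H)}

lemma apply_eq_powerMean (hm : IsKuboAndoPowerMean p m) {A B : H →L[ℂ] H}
    (hA : IsStrictlyPositive A) (hB : IsStrictlyPositive B) : m A B = powerMean p A B :=
  hm.1 A B hA.nonneg hB.nonneg hA.isUnit hB.isUnit

lemma eq_zero_of_norm_le (hm : IsKuboAndoPowerMean p m) {A B : H →L[ℂ] H} (hA : 0 ≤ A)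
    (hB : 0 ≤ B) (C : ℝ) (hC : ∀ ε > 0, ‖m (A + ε • 1) (B + ε • 1)‖ ≤ C * ε) : m A B = 0 := by
  ext x
  have hbound : ∀ᶠ ε in nhdsWithin 0 (Set.Ioi 0), ‖m (A + ε • 1) (B + ε • 1) x‖ ≤ C * ε * ‖x‖ :=
    eventually_nhdsWithin_of_forall fun ε hε =>
      (ContinuousLinearMap.le_opNorm _ x).trans (by gcongr; exact hC ε hε)
  have hlim : Filter.Tendsto (fun ε : ℝ => C * ε * ‖x‖) (nhdsWithin 0 (Set.Ioi 0)) (nhds 0) := by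
    refine tendsto_nhdsWithin_of_tendsto_nhds ?_
    simpa using (by fun_prop : Continuous fun ε : ℝ => C * ε * ‖x‖).tendsto 0
  exact tendsto_nhds_unique (hm.2 A B hA hB x) (squeeze_zero_norm' hbound hlim)

lemma zero_left (hp : p < 0) (hm : IsKuboAndoPowerMean p m) {B : H →L[ℂ] H} (hB : 0 ≤ B) :
    m 0 B = 0 := by
  refine hm.eq_zero_of_norm_le le_rfl hB (2 ^ (-p⁻¹)) fun ε hε => ?_
  have hε1 : IsStrictlyPositive (ε • 1 : H →L[ℂ] H) := isStrictlyPositive_one.smul hε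
  rw [zero_add, hm.apply_eq_powerMean hε1 (hε1.nonneg_add hB)]
  calc ‖powerMean p (ε • 1 : H →L[ℂ] H) (B + ε • 1)‖ ≤ 2 ^ (-p⁻¹) * ‖(ε • 1 : H →L[ℂ] H)‖ :=
        norm_powerMean_le_left hp hε1 (hε1.nonneg_add hB)
    _ ≤ 2 ^ (-p⁻¹) * ε := by gcongr; exact CStarAlgebra.norm_real_smul_one_le hε.le

lemma zero_right (hp : p < 0) (hm : IsKuboAndoPowerMean p m) {A : H →L[ℂ] H} (hA : 0 ≤ A) :
    m A 0 = 0 := by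
  refine hm.eq_zero_of_norm_le hA le_rfl (2 ^ (-p⁻¹)) fun ε hε => ?_
  have hε1 : IsStrictlyPositive (ε • 1 : H →L[ℂ] H) := isStrictlyPositive_one.smul hε
  rw [zero_add, hm.apply_eq_powerMean (hε1.nonneg_add hA) hε1]
  calc ‖powerMean p (A + ε • 1) (ε • 1 : H →L[ℂ] H)‖ ≤ 2 ^ (-p⁻¹) * ‖(ε • 1 : H →L[ℂ] H)‖ :=
        norm_powerMean_le_right hp (hε1.nonneg_add hA) hε1
    _ ≤ 2 ^ (-p⁻¹) * ε := by gcongr; exact CStarAlgebra.norm_real_smul_one_le hε.le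

end IsKuboAndoPowerMean

theorem eq_zero_iff_kuboAndo_fixed_general (p : ℝ) (hp1 : p < 0)
    (m : (H →L[ℂ] H) → (H →L[ℂ] H) → (H →L[ℂ] H)) (hm : IsKuboAndoPowerMean p m)
    (A : H →L[ℂ] H) (hA : 0 ≤ A) :
    A = 0 ↔ ∀ X : H →L[ℂ] H, 0 ≤ X → m A X = A := by
  constructor
  · rintro rfl X hX
    exact hm.zero_left hp1 hX
  · intro h
    exact (h 0 le_rfl).symm.trans (hm.zero_right hp1 hA)

/-- For `-1 ≤ p < 0` and a positive operator `A`, one has `A = 0` iff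
`A 𝔪ₚ X = A` for every positive operator `X`. -/
theorem eq_zero_iff_kuboAndo_fixed (p : ℝ) (hp0 : -1 ≤ p) (hp1 : p < 0)
    (m : (H →L[ℂ] H) → (H →L[ℂ] H) → (H →L[ℂ] H)) (hm : IsKuboAndoPowerMean p m)
    (A : H →L[ℂ] H) (hA : 0 ≤ A) :
    A = 0 ↔ ∀ X : H →L[ℂ] H, 0 ≤ X → m A X = A :=
  eq_zero_iff_kuboAndo_fixed_general p hp1 m hm A hA
end
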